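/- arXiv:1511.02599 — 4 statements merged into one kernel-verified Lean document; each statement's English description precedes it below -/
import Mathlib

section
/- Consider a bipartite graph from n agents to pieces in which each two agents share at most one common neighbor, and such that for any set of agents each having at least two neighbors, one of them has a neighbor belonging to no other agent in the set (formally: the 'last cutter' property). Then if n−1 of the agents each have at least 2 neighbors, every group of k of these n−1 agents jointly has at least k+1 neighbors; hence together with the remaining agent (with at least one neighbor) a matching saturating all n agents exists. -/
/-!
Remove the last cutter of a group of known agents: his private piece is lost, so the group's
neighbourhood shrinks by at least one piece while the group shrinks by exactly one agent.
Descending to a single known agent, who has at least two pieces, gives a surplus of one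
piece for every group of known agents. That surplus absorbs the unknown agent in Hall's
condition, and Hall's marriage theorem produces the matching.
-/

open Finset

section

variable {ι β : Type*}

/-- The paper's last-cutter property of a group `S`: its last cutter `i` has a private piece `p`. -/
def HasPrivateElement (t : ι → Finset β) (S : Finset ι) : Prop :=
  ∃ i ∈ S, ∃ p ∈ t i, ∀ j ∈ S, j ≠ i → p ∉ t j

variable [DecidableEq ι] [DecidableEq β]

lemma card_biUnion_erase_lt {t : ι → Finset β} {S : Finset ι} {i : ι} {p : β}
    (hi : i ∈ S) (hp : p ∈ t i) (hpriv : ∀ j ∈ S, j ≠ i → p ∉ t j) :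
    #((S.erase i).biUnion t) < #(S.biUnion t) := by
  apply card_lt_card
  rw [ssubset_iff_of_subset (biUnion_subset_biUnion_of_subset_left t (erase_subset i S))]
  refine ⟨p, mem_biUnion.2 ⟨i, hi, hp⟩, ?_⟩
  simp only [mem_biUnion, mem_erase, not_exists, not_and]
  exact fun j ⟨hji, hjS⟩ => hpriv j hjS hji

theorem card_add_one_le_card_biUnion_of_hasPrivateElement {t : ι → Finset β} (S : Finset ι)
    (hS : S.Nonempty) (htwo : ∀ i ∈ S, 2 ≤ #(t i))
    (hpriv : ∀ T ⊆ S, T.Nonempty → HasPrivateElement t T) :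
    #S + 1 ≤ #(S.biUnion t) := by
  induction S using Finset.strongInduction with
  | H S ih =>
    obtain ⟨i, hi, p, hp, hp_priv⟩ := hpriv S subset_rfl hS
    have hlt := card_biUnion_erase_lt hi hp hp_priv
    rcases (S.erase i).eq_empty_or_nonempty with hrest | hrest
    · obtain rfl : S = {i} := ((erase_eq_empty_iff S i).1 hrest).resolve_left hS.ne_empty
      simpa using htwo i hi
    · have hsub : S.erase i ⊆ S := erase_subset i S
      have ih' := ih _ (erase_ssubset hi) hrest (fun j hj => htwo j (hsub hj))
        (fun T hT => hpriv T (hT.trans hsub))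
      have hcard := card_erase_add_one hi
      omega

theorem card_le_card_biUnion_of_surplus_off {t : ι → Finset β} (u : ι) (hu : (t u).Nonempty)
    (hsurplus : ∀ S : Finset ι, S.Nonempty → (∀ i ∈ S, i ≠ u) → #S + 1 ≤ #(S.biUnion t))
    (T : Finset ι) : #T ≤ #(T.biUnion t) := by
  rcases (T.erase u).eq_empty_or_nonempty with hrest | hrest
  · rcases (erase_eq_empty_iff T u).1 hrest with rfl | rfl
    · simp
    · simpa using hu.card_pos
  · have h := hsurplus _ hrest (fun j hj => ne_of_mem_erase hj)
    have hmono := card_le_card (biUnion_subset_biUnion_of_subset_left t (erase_subset u T))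
    have hcard := pred_card_le_card_erase (s := T) (a := u)
    omega

end

theorem last_cutter_matching_general {β : Type*} [DecidableEq β] (n : ℕ)
    (nbhd : Fin n → Finset β) (u : Fin n)
    (hne : ∀ i, (nbhd i).Nonempty)
    (htwo : ∀ i, i ≠ u → 2 ≤ (nbhd i).card)
    (hlastcutter : ∀ S : Finset (Fin n), S.Nonempty → (∀ i ∈ S, i ≠ u) →
      ∃ i ∈ S, ∃ p ∈ nbhd i, ∀ j ∈ S, j ≠ i → p ∉ nbhd j) :
    (∀ S : Finset (Fin n), S.Nonempty → (∀ i ∈ S, i ≠ u) →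
      S.card + 1 ≤ (S.biUnion nbhd).card) ∧
    ∃ f : Fin n → β, Function.Injective f ∧ ∀ i, f i ∈ nbhd i := by
  have hsurplus : ∀ S : Finset (Fin n), S.Nonempty → (∀ i ∈ S, i ≠ u) →
      #S + 1 ≤ #(S.biUnion nbhd) := fun S hS hSu =>
    card_add_one_le_card_biUnion_of_hasPrivateElement S hS (fun i hi => htwo i (hSu i hi))
      (fun T hT hTne => hlastcutter T hTne (fun i hi => hSu i (hT hi)))
  exact ⟨hsurplus, (all_card_le_biUnion_card_iff_exists_injective nbhd).1
    (card_le_card_biUnion_of_surplus_off u (hne u) hsurplus)⟩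

/-- Unknown-agent lemma (structural version): in a bipartite preference graph where each
two agents share at most one common neighbor and the "last cutter" property holds (in any
nonempty group of known agents, some agent has a preferred piece preferred by no other
agent of the group), if each of the `n-1` known agents (all agents except `u`) has at
least 2 neighbors, then every nonempty group of `k` known agents jointly has at least
`k+1` neighbors, and a matching saturating all `n` agents exists. -/
theorem last_cutter_matching {β : Type*} [Fintype β] [DecidableEq β] (n : ℕ)
    (nbhd : Fin n → Finset β) (u : Fin n)
    (hne : ∀ i, (nbhd i).Nonempty)
    (htwo : ∀ i, i ≠ u → 2 ≤ (nbhd i).card)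
    (hshare : ∀ i j : Fin n, i ≠ j → (nbhd i ∩ nbhd j).card ≤ 1)
    (hlastcutter : ∀ S : Finset (Fin n), S.Nonempty → (∀ i ∈ S, i ≠ u) →
      ∃ i ∈ S, ∃ p ∈ nbhd i, ∀ j ∈ S, j ≠ i → p ∉ nbhd j) :
    (∀ S : Finset (Fin n), S.Nonempty → (∀ i ∈ S, i ≠ u) →
      S.card + 1 ≤ (S.biUnion nbhd).card) ∧
    ∃ f : Fin n → β, Function.Injective f ∧ ∀ i, f i ∈ nbhd i :=
  last_cutter_matching_general n nbhd u hne htwo hlastcutter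
end

section
/- Domination–separation lemma: In a domination digraph on n agents, if the agents can be partitioned into two nonempty groups G1 and G2 such that every agent in G2 dominates every agent in G1, then giving the entire remaining cake, divided envy-freely among the agents of G1, yields an envy-free allocation of the entire cake. -/
open MeasureTheory Set
open scoped ENNReal

/-!
Write `R` for the remainder. An agent `i` of `G1` compares `X j ∪ Y j` piece by piece with
`X i ∪ Y i`: it does not envy `X j` by envy-freeness of `X`, nor `Y j`, which is empty if
`j ∈ G2` and is covered by envy-freeness of `Y` on `G1` otherwise. An agent `i` of `G2`
receives nothing from `R`, and `X j ∪ Y j` is worth at most `V i (X j) + V i R` to it,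
which domination bounds by `V i (X i)` when `j ∈ G1`; when `j ∈ G2` there is nothing to add.
-/

section

variable {α : Type*} [MeasurableSpace α] {μ : Measure α}

theorem measure_union_le_union_of_le {A B A' B' : Set α} (hA : μ A ≤ μ A')
    (hB : μ B ≤ μ B') (hd : Disjoint A' B')
    (hB' : MeasurableSet B') : μ (A ∪ B) ≤ μ (A' ∪ B') :=
  calc μ (A ∪ B) ≤ μ A + μ B := measure_union_le A B
    _ ≤ μ A' + μ B' := add_le_add hA hB
    _ = μ (A' ∪ B') := (measure_union hd hB').symm

theorem measure_union_le_of_add_le_of_subset {A B R C : Set α} (hdom : μ A + μ R ≤ μ C)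
    (hB : B ⊆ R) : μ (A ∪ B) ≤ μ C :=
  calc μ (A ∪ B) ≤ μ A + μ B := measure_union_le A B
    _ ≤ μ A + μ R := by gcongr
    _ ≤ μ C := hdom

end

theorem domination_separation_general {α : Type*} [MeasurableSpace α] (n : ℕ)
    (V : Fin n → Measure α)
    (X : Fin n → Set α)
    (R : Set α)
    (hR : R = univ \ ⋃ i, X i)
    (hXEF : ∀ i j : Fin n, V i (X j) ≤ V i (X i))
    (G1 G2 : Finset (Fin n))
    (hcoverG : G1 ∪ G2 = Finset.univ)
    (hdom : ∀ i ∈ G2, ∀ j ∈ G1, V i (X j) + V i R ≤ V i (X i))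
    (Y : Fin n → Set α) (hYmeas : ∀ i, MeasurableSet (Y i))
    (hYsub : ∀ i, Y i ⊆ R) (hYG2 : ∀ i ∈ G2, Y i = ∅)
    (hYEF : ∀ i ∈ G1, ∀ j ∈ G1, V i (Y j) ≤ V i (Y i)) :
    ∀ i j : Fin n, V i (X j ∪ Y j) ≤ V i (X i ∪ Y i) := by
  intro i j
  have hmem (k : Fin n) : k ∈ G1 ∨ k ∈ G2 :=
    Finset.mem_union.1 (hcoverG ▸ Finset.mem_univ k)
  have hXR (k : Fin n) : Disjoint (X k) R :=
    hR ▸ disjoint_sdiff_right.mono_left (subset_iUnion X k)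
  rcases hmem i with hi | hi
  · refine measure_union_le_union_of_le (hXEF i j) ?_ ((hXR i).mono_right (hYsub i)) (hYmeas i)
    rcases hmem j with hj | hj
    · exact hYEF i hi j hj
    · simp [hYG2 j hj]
  · rw [hYG2 i hi, union_empty]
    rcases hmem j with hj | hj
    · exact measure_union_le_of_add_le_of_subset (hdom i hi j hj) (hYsub j)
    · simpa [hYG2 j hj] using hXEF i j

/-- Domination–separation lemma: given an envy-free partial allocation `X` with
remainder `R`, if the agents split into nonempty groups `G1`, `G2` with every agent of
`G2` dominating every agent of `G1`, then dividing the entire remainder envy-freely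
among the agents of `G1` yields an envy-free allocation of the entire cake. -/
theorem domination_separation {α : Type*} [MeasurableSpace α] (n : ℕ)
    (V : Fin n → Measure α) [∀ i, IsProbabilityMeasure (V i)]
    (X : Fin n → Set α) (hXmeas : ∀ i, MeasurableSet (X i))
    (hXdisj : Pairwise fun i j => Disjoint (X i) (X j))
    (R : Set α) (hRmeas : MeasurableSet R)
    (hR : R = univ \ ⋃ i, X i)
    (hXEF : ∀ i j : Fin n, V i (X j) ≤ V i (X i))
    (G1 G2 : Finset (Fin n)) (hG1 : G1.Nonempty) (hG2 : G2.Nonempty)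
    (hdisjG : Disjoint G1 G2) (hcoverG : G1 ∪ G2 = Finset.univ)
    (hdom : ∀ i ∈ G2, ∀ j ∈ G1, V i (X j) + V i R ≤ V i (X i))
    (Y : Fin n → Set α) (hYmeas : ∀ i, MeasurableSet (Y i))
    (hYsub : ∀ i, Y i ⊆ R) (hYG2 : ∀ i ∈ G2, Y i = ∅)
    (hYdisj : Pairwise fun i j => Disjoint (Y i) (Y j))
    (hYcover : (⋃ i, Y i) = R)
    (hYEF : ∀ i ∈ G1, ∀ j ∈ G1, V i (Y j) ≤ V i (Y i)) :
    ∀ i j : Fin n, V i (X j ∪ Y j) ≤ V i (X i ∪ Y i) :=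
  domination_separation_general n V X R hR hXEF G1 G2 hcoverG hdom Y hYmeas hYsub hYG2 hYEF
end

section
/- Domination–sequence lemma: Suppose there is an envy-free partial allocation X with remainder R, and a sequence of n−1 agents A_2, …, A_n such that A_i dominates A_j whenever 2 ≤ i < j. If the remaining agent A_1 partitions R into n pieces of equal value to A_1, and the agents take pieces in the order A_n, A_{n−1}, …, A_2, A_1, each taking a piece of maximal value to themselves among those remaining, then the combined allocation of the entire cake is envy-free. -/
/-!
Each bundle is `X i ∪ Y (σ i)`, with `Y (σ i)` inside the remainder `R`, which is disjoint from
every `X j`. Agent `0` values all pieces of `R` equally, so envy-freeness of `X` suffices for it.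
An agent `i > 0` compares itself with a later chooser `j < i` piecewise: `X` is envy-free and it
chose its piece before `j`. Against an earlier chooser `j > i` it uses domination: `j`'s piece of
`R` is worth at most `V i R`, which domination already pays for.
-/

open MeasureTheory Set

namespace MeasureTheory

variable {α : Type*} [MeasurableSpace α] {μ : Measure α}

theorem measure_union_le_measure_union {A A' B B' : Set α} (hAB : Disjoint A B)
    (hB : MeasurableSet B) (hA' : μ A' ≤ μ A) (hB' : μ B' ≤ μ B) :
    μ (A' ∪ B') ≤ μ (A ∪ B) :=
  calc μ (A' ∪ B') ≤ μ A' + μ B' := measure_union_le A' B'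
    _ ≤ μ A + μ B := add_le_add hA' hB'
    _ = μ (A ∪ B) := (measure_union hAB hB).symm

theorem measure_union_le_of_add_le {A A' B' R : Set α} (hB'R : B' ⊆ R)
    (h : μ A' + μ R ≤ μ A) (B : Set α) : μ (A' ∪ B') ≤ μ (A ∪ B) :=
  calc μ (A' ∪ B') ≤ μ A' + μ B' := measure_union_le A' B'
    _ ≤ μ A' + μ R := add_le_add_right (measure_mono hB'R) _
    _ ≤ μ A := h
    _ ≤ μ (A ∪ B) := measure_mono subset_union_left

end MeasureTheory

theorem domination_sequence_general {α : Type*} [MeasurableSpace α] (n : ℕ)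
    (V : Fin (n+1) → Measure α)
    (X : Fin (n+1) → Set α)
    (R : Set α)
    (hR : R = univ \ ⋃ i, X i)
    (hXEF : ∀ i j : Fin (n+1), V i (X j) ≤ V i (X i))
    -- agent i dominates agent j whenever 1 ≤ i < j:
    (hdom : ∀ i j : Fin (n+1), 0 < i → i < j → V i (X j) + V i R ≤ V i (X i))
    -- agent 0 partitions R into n pieces of equal value to itself:
    (Y : Fin (n+1) → Set α) (hYmeas : ∀ k, MeasurableSet (Y k))
    (hYsub : ∀ k, Y k ⊆ R)
    (hYeq : ∀ k, V 0 (Y k) = V 0 R / (n+1))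
    -- σ assigns to each agent its chosen piece; larger indices choose earlier, and each
    -- agent's piece is best among those chosen by later-choosing (smaller-index) agents:
    (σ : Fin (n+1) → Fin (n+1))
    (hchoice : ∀ i j : Fin (n+1), j < i → V i (Y (σ j)) ≤ V i (Y (σ i))) :
    ∀ i j : Fin (n+1), V i (X j ∪ Y (σ j)) ≤ V i (X i ∪ Y (σ i)) := by
  intro i j
  have hXY : Disjoint (X i) (Y (σ i)) :=
    (disjoint_sdiff_right.mono_left (subset_iUnion X i)).mono_right (hR ▸ hYsub (σ i))
  obtain rfl | hi := eq_or_ne i 0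
  · exact measure_union_le_measure_union hXY (hYmeas _) (hXEF 0 j)
      ((hYeq _).trans (hYeq _).symm).le
  rcases lt_trichotomy j i with hji | rfl | hij
  · exact measure_union_le_measure_union hXY (hYmeas _) (hXEF i j) (hchoice i j hji)
  · exact le_rfl
  · exact measure_union_le_of_add_le (hYsub _) (hdom i j (Fin.pos_iff_ne_zero.mpr hi) hij) _

/-- Domination–sequence lemma: given an envy-free partial allocation `X` with remainder
`R`, and a sequence of agents `1,…,n-1` (agent `0` playing the role of `A_1`) such that
agent `i` dominates agent `j` whenever `1 ≤ i < j`, if agent `0` partitions `R` into `n`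
pieces of equal value to itself and the agents take best pieces in decreasing index
order (each agent's chosen piece is at least as valuable to it as any piece chosen by a
later-choosing agent), then the combined allocation of the entire cake is envy-free. -/
theorem domination_sequence {α : Type*} [MeasurableSpace α] (n : ℕ)
    (V : Fin (n+1) → Measure α) [∀ i, IsProbabilityMeasure (V i)]
    (X : Fin (n+1) → Set α) (hXmeas : ∀ i, MeasurableSet (X i))
    (hXdisj : Pairwise fun i j => Disjoint (X i) (X j))
    (R : Set α) (hRmeas : MeasurableSet R)
    (hR : R = univ \ ⋃ i, X i)
    (hXEF : ∀ i j : Fin (n+1), V i (X j) ≤ V i (X i))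
    -- agent i dominates agent j whenever 1 ≤ i < j:
    (hdom : ∀ i j : Fin (n+1), 0 < i → i < j → V i (X j) + V i R ≤ V i (X i))
    -- agent 0 partitions R into n pieces of equal value to itself:
    (Y : Fin (n+1) → Set α) (hYmeas : ∀ k, MeasurableSet (Y k))
    (hYsub : ∀ k, Y k ⊆ R)
    (hYdisj : Pairwise fun k l => Disjoint (Y k) (Y l))
    (hYcover : (⋃ k, Y k) = R)
    (hYeq : ∀ k, V 0 (Y k) = V 0 R / (n+1))
    -- σ assigns to each agent its chosen piece; larger indices choose earlier, and each
    -- agent's piece is best among those chosen by later-choosing (smaller-index) agents: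
    (σ : Fin (n+1) → Fin (n+1)) (hσ : Function.Bijective σ)
    (hchoice : ∀ i j : Fin (n+1), j < i → V i (Y (σ j)) ≤ V i (Y (σ i))) :
    ∀ i j : Fin (n+1), V i (X j ∪ Y (σ j)) ≤ V i (X i ∪ Y (σ i)) :=
  domination_sequence_general n V X R hR hXEF hdom Y hYmeas hYsub hYeq σ hchoice
end

section
/- If in a domination digraph on n agents there is a set S of n−1 agents each of whom dominates at least n−2 agents, then either all agents of S dominate the excluded agent, or there exists an ordering A_2, …, A_n of some n−1 of the agents such that A_i dominates A_j whenever i < j, or more generally the agents can be split into two nonempty groups G1, G2 with every member of G2 dominating every member of G1. (Hence the graph is 'solvable'.) -/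
/-!
Every agent other than `a` fails to dominate at most one other agent. Starting from the agents
other than `a`, repeatedly remove one that dominates all the other remaining ones: if this
exhausts them, the removal order is the chain. Otherwise it stops at a nonempty set `T` in which each member misses some
other member of `T`; that is its only miss, so `T` dominates its complement, which contains `a`.
-/

open Finset

namespace DominationGraph

variable {α : Type*} (D : α → α → Prop)

def DominatesAllButOne (i : α) : Prop :=
  ∃ w, ∀ j, j ≠ i → j ≠ w → D i j

variable {D}

theorem dominatesAllButOne_of_card_sub_two_le [Fintype α] [DecidableEq α] [DecidableRel D]
    {i : α} (h : Fintype.card α - 2 ≤ #{j | j ≠ i ∧ D i j}) : DominatesAllButOne D i := by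
  have hsplit : #{j | j ≠ i ∧ D i j} + #{j | j ≠ i ∧ ¬ D i j} = Fintype.card α - 1 := by
    rw [← filter_filter, ← filter_filter, card_filter_add_card_filter_not, filter_ne',
      card_erase_of_mem (mem_univ _), card_univ]
  have : Nonempty α := ⟨i⟩
  obtain ⟨w, hw⟩ := card_le_one_iff_subset_singleton.1 (show #{j | j ≠ i ∧ ¬ D i j} ≤ 1 by omega)
  refine ⟨w, fun j hji hjw => ?_⟩
  by_contra hD
  exact hjw (mem_singleton.1 (hw (by simpa using ⟨hji, hD⟩)))

theorem dominates_compl_of_forall_exists_not_dominates {T : Finset α}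
    (hT : ∀ i ∈ T, DominatesAllButOne D i) (hmiss : ∀ s ∈ T, ∃ j ∈ T, j ≠ s ∧ ¬ D s j) :
    ∀ i ∈ T, ∀ j ∉ T, D i j := by
  intro i hi j hj
  obtain ⟨w, hw⟩ := hT i hi
  obtain ⟨k, hkT, hki, hk⟩ := hmiss i hi
  have hkw : k = w := by_contra fun h => hk (hw k hki h)
  exact hw j (by rintro rfl; exact hj hi) (by rintro rfl; exact hj (hkw ▸ hkT))

theorem exists_dominating_subset_or_exists_pairwise_list [DecidableEq α] (T : Finset α)
    (hT : ∀ i ∈ T, DominatesAllButOne D i) :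
    (∃ C ⊆ T, C.Nonempty ∧ ∀ i ∈ C, ∀ j ∉ C, D i j) ∨
      ∃ l : List α, l.Nodup ∧ l.toFinset = T ∧ l.Pairwise D := by
  induction T using Finset.strongInduction with
  | H T ih =>
    rcases T.eq_empty_or_nonempty with rfl | hTne
    · exact Or.inr ⟨[], by simp⟩
    by_cases hsource : ∃ s ∈ T, ∀ j ∈ T, j ≠ s → D s j
    · obtain ⟨s, hsT, hs⟩ := hsource
      rcases ih (T.erase s) (erase_ssubset hsT) fun i hi => hT i (mem_of_mem_erase hi) with
        ⟨C, hCT, hC⟩ | ⟨l, hnd, hl, hpw⟩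
      · exact Or.inl ⟨C, hCT.trans (erase_subset _ _), hC⟩
      · refine Or.inr ⟨s :: l, ?_, ?_, ?_⟩
        · exact List.nodup_cons.2 ⟨fun h => by simpa [hl] using List.mem_toFinset.2 h, hnd⟩
        · rw [List.toFinset_cons, hl, insert_erase hsT]
        · refine List.Pairwise.cons (fun j hj => ?_) hpw
          obtain ⟨hjs, hjT⟩ := mem_erase.1 (hl ▸ List.mem_toFinset.2 hj)
          exact hs j hjT hjs
    · push Not at hsource
      exact Or.inl ⟨T, Subset.rfl, hTne,
        dominates_compl_of_forall_exists_not_dominates hT hsource⟩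

theorem exists_fin_injective_of_nodup_of_pairwise {l : List α} (hnd : l.Nodup)
    (hpw : l.Pairwise D) {m : ℕ} (hm : l.length = m) :
    ∃ A : Fin m → α, Function.Injective A ∧ ∀ i j : Fin m, i < j → D (A i) (A j) := by
  subst hm
  exact ⟨l.get, List.nodup_iff_injective_get.1 hnd, List.pairwise_iff_get.1 hpw⟩

end DominationGraph

open DominationGraph in
/-- Solvability of domination graphs (combinatorial core of Lemma `solvable-n-2`):
if in a domination digraph on `n` agents there is an agent `a` such that each of the
other `n-1` agents dominates at least `n-2` agents (other than itself), then either the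
agents split into nonempty groups `G1`, `G2` with every member of `G2` dominating every
member of `G1`, or there is a chain of `n-1` distinct agents each dominating all later
ones. -/
theorem solvable_domination_graph (n : ℕ)
    (D : Fin n → Fin n → Prop) [DecidableRel D]
    (a : Fin n)
    (hdeg : ∀ i : Fin n, i ≠ a →
      n - 2 ≤ (Finset.univ.filter fun j => j ≠ i ∧ D i j).card) :
    (∃ G1 G2 : Finset (Fin n), G1.Nonempty ∧ G2.Nonempty ∧
      Disjoint G1 G2 ∧ G1 ∪ G2 = Finset.univ ∧
      ∀ i ∈ G2, ∀ j ∈ G1, D i j) ∨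
    (∃ A : Fin (n - 1) → Fin n, Function.Injective A ∧
      ∀ i j : Fin (n - 1), i < j → D (A i) (A j)) := by
  have hT : ∀ i ∈ univ.erase a, DominatesAllButOne D i := fun i hi =>
    dominatesAllButOne_of_card_sub_two_le (by simpa using hdeg i (ne_of_mem_erase hi))
  rcases exists_dominating_subset_or_exists_pairwise_list _ hT with
    ⟨C, hCT, hCne, hC⟩ | ⟨l, hnd, hl, hpw⟩
  · have haC : a ∈ Cᶜ := mem_compl.2 fun h => (ne_of_mem_erase (hCT h)) rfl
    exact Or.inl ⟨Cᶜ, C, ⟨a, haC⟩, hCne, disjoint_compl_left, by rw [union_comm, union_compl],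
      fun i hi j hj => hC i hi j (mem_compl.1 hj)⟩
  · refine Or.inr (exists_fin_injective_of_nodup_of_pairwise hnd hpw ?_)
    rw [← List.toFinset_card_of_nodup hnd, hl, card_erase_of_mem (mem_univ a), card_fin]
end
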